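/- arXiv:math/0606227 — 2 statements merged into one kernel-verified Lean document; each statement's English description precedes it below -/
import Mathlib

section
/- A quadruple (d₁, d₂, d₃, d₄) of positive integers with d₁ ≤ d₂ ≤ d₃ ≤ d₄ is ripe if and only if it is one of (1,1,1,1), (1,1,1,2), (1,1,2,3), (1,2,3,5), (1,3,4,5), (2,3,5,7), (3,4,5,7). -/
open scoped BigOperators

/-- A point of `ℝ³` is a lattice point if every coordinate is an integer. -/
def IsLatticePoint (x : Fin 3 → ℝ) : Prop := ∀ i, ∃ z : ℤ, x i = (z : ℝ)

/-- Four lattice points of `ℝ³` that are not coplanar: the vertex map of a lattice tetrahedron. -/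
def IsLatticeTet (v : Fin 4 → Fin 3 → ℝ) : Prop :=
  (∀ j, IsLatticePoint (v j)) ∧ AffineIndependent ℝ v

/-- The solid tetrahedron spanned by the four vertices. -/
def tetSet (v : Fin 4 → Fin 3 → ℝ) : Set (Fin 3 → ℝ) := convexHull ℝ (Set.range v)

/-- A lattice tetrahedron is clean if the only lattice points on its boundary are its vertices. -/
def CleanTet (v : Fin 4 → Fin 3 → ℝ) : Prop :=
  ∀ x ∈ frontier (tetSet v), IsLatticePoint x → x ∈ Set.range v

/-- The affine map `x ↦ M x + u` determined by an integer matrix `M` and integer vector `u`. -/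
noncomputable def affMap (M : Matrix (Fin 3) (Fin 3) ℤ) (u : Fin 3 → ℤ) (x : Fin 3 → ℝ) :
    Fin 3 → ℝ :=
  fun i => (∑ j, (M i j : ℝ) * x j) + (u i : ℝ)

/-- Two lattice tetrahedra are equivalent if an affine unimodular map carries the vertex set of
one onto the vertex set of the other. -/
def TetEquiv (v v' : Fin 4 → Fin 3 → ℝ) : Prop :=
  ∃ M : Matrix (Fin 3) (Fin 3) ℤ, (M.det = 1 ∨ M.det = -1) ∧
    ∃ u : Fin 3 → ℤ, affMap M u '' Set.range v = Set.range v'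

/-- The tetrahedron `T_{a,b,n}` with vertices `(0,0,0)`, `(1,0,0)`, `(0,1,0)`, `(a,b,n)`. -/
noncomputable def stdTet (a b n : ℤ) : Fin 4 → Fin 3 → ℝ :=
  ![![0, 0, 0], ![1, 0, 0], ![0, 1, 0], ![(a : ℝ), (b : ℝ), (n : ℝ)]]

/-- The number `i(T)` of lattice points interior to the tetrahedron. -/
noncomputable def interiorLatticeCount (v : Fin 4 → Fin 3 → ℝ) : ℕ :=
  Set.ncard {x : Fin 3 → ℝ | x ∈ interior (tetSet v) ∧ IsLatticePoint x}

/-- A 1-point lattice tetrahedron: clean, with exactly one interior lattice point. -/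
def OnePointTet (v : Fin 4 → Fin 3 → ℝ) : Prop :=
  IsLatticeTet v ∧ CleanTet v ∧
    ∃! w : Fin 3 → ℝ, w ∈ interior (tetSet v) ∧ IsLatticePoint w

/-- An empty tetrahedron: no lattice points in the interior. -/
def IsEmptyTet (v : Fin 4 → Fin 3 → ℝ) : Prop :=
  ∀ x ∈ interior (tetSet v), ¬ IsLatticePoint x

/-- A quadruple `(d₁,d₂,d₃,d₄)` of positive integers is ripe if, with `N = ∑ dⱼ`:
(i) each `gcd(dⱼ, N) = 1`; (ii) each `dᵢ` divides the sum of two of the other three;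
(iii) `dⱼ = dᵢ` (for `j ≠ i`) or `dⱼ = 2 dᵢ` forces `dᵢ = 1`. -/
def Ripe (d : Fin 4 → ℤ) : Prop :=
  (∀ j, 0 < d j) ∧
  (∀ j, Int.gcd (d j) (∑ i, d i) = 1) ∧
  (∀ i, ∃ j k, j ≠ i ∧ k ≠ i ∧ j ≠ k ∧ d i ∣ (d j + d k)) ∧
  (∀ i j, ((j ≠ i ∧ d j = d i) ∨ d j = 2 * d i) → d i = 1)

/-- The `u`-width of a set `S ⊆ ℝ³`: `max {u·x : x ∈ S} - min {u·x : x ∈ S}`. -/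
noncomputable def uWidth (S : Set (Fin 3 → ℝ)) (u : Fin 3 → ℤ) : ℝ :=
  sSup ((fun x => ∑ i, (u i : ℝ) * x i) '' S) - sInf ((fun x => ∑ i, (u i : ℝ) * x i) '' S)

/-- The lattice width of a set: the minimum of its `u`-widths over nonzero integer `u`. -/
noncomputable def latticeWidth (S : Set (Fin 3 → ℝ)) : ℝ :=
  sInf {w : ℝ | ∃ u : Fin 3 → ℤ, u ≠ 0 ∧ uWidth S u = w}

set_option maxHeartbeats 1000000 in
private lemma ext3 (dd : Fin 4 → ℤ)
    (h : ∃ j k, j ≠ (3:Fin 4) ∧ k ≠ 3 ∧ j ≠ k ∧ dd 3 ∣ (dd j + dd k)) :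
    dd 3 ∣ dd 0 + dd 1 ∨ dd 3 ∣ dd 0 + dd 2 ∨ dd 3 ∣ dd 1 + dd 2 := by
  obtain ⟨j,k,hj,hk,hjk,hd⟩ := h
  fin_cases j <;> fin_cases k <;> simp_all [add_comm] <;>
    first
      | exact Or.inl ((add_comm (dd 1) (dd 0)) ▸ hd)
      | exact Or.inr (Or.inl ((add_comm (dd 2) (dd 0)) ▸ hd))
      | exact Or.inr (Or.inr ((add_comm (dd 2) (dd 1)) ▸ hd))

set_option maxHeartbeats 1000000 in
private lemma ext2 (dd : Fin 4 → ℤ)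
    (h : ∃ j k, j ≠ (2:Fin 4) ∧ k ≠ 2 ∧ j ≠ k ∧ dd 2 ∣ (dd j + dd k)) :
    dd 2 ∣ dd 0 + dd 1 ∨ dd 2 ∣ dd 0 + dd 3 ∨ dd 2 ∣ dd 1 + dd 3 := by
  obtain ⟨j,k,hj,hk,hjk,hd⟩ := h
  fin_cases j <;> fin_cases k <;> simp_all [add_comm] <;>
    first
      | exact Or.inl ((add_comm (dd 1) (dd 0)) ▸ hd)
      | exact Or.inr (Or.inl ((add_comm (dd 3) (dd 0)) ▸ hd))
      | exact Or.inr (Or.inr ((add_comm (dd 3) (dd 1)) ▸ hd))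

set_option maxHeartbeats 1000000 in
private lemma ext1 (dd : Fin 4 → ℤ)
    (h : ∃ j k, j ≠ (1:Fin 4) ∧ k ≠ 1 ∧ j ≠ k ∧ dd 1 ∣ (dd j + dd k)) :
    dd 1 ∣ dd 0 + dd 2 ∨ dd 1 ∣ dd 0 + dd 3 ∨ dd 1 ∣ dd 2 + dd 3 := by
  obtain ⟨j,k,hj,hk,hjk,hd⟩ := h
  fin_cases j <;> fin_cases k <;> simp_all [add_comm] <;>
    first
      | exact Or.inl ((add_comm (dd 2) (dd 0)) ▸ hd)
      | exact Or.inr (Or.inl ((add_comm (dd 3) (dd 0)) ▸ hd))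
      | exact Or.inr (Or.inr ((add_comm (dd 3) (dd 2)) ▸ hd))

private lemma mulc {d s : ℤ} (hd : 0 < d) (hs : 0 < s) (h : d ∣ s) (h4 : s ≤ 4*d) :
    s = d ∨ s = 2*d ∨ s = 3*d ∨ s = 4*d := by
  obtain ⟨k, rfl⟩ := h
  have hk : 0 < k := by nlinarith
  have hk4 : k ≤ 4 := by nlinarith
  interval_cases k
  · exact Or.inl (by ring)
  · exact Or.inr (Or.inl (by ring))
  · exact Or.inr (Or.inr (Or.inl (by ring)))
  · exact Or.inr (Or.inr (Or.inr (by ring)))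

private lemma dred {c s t : ℤ} (k : ℤ) (h : c ∣ s) (he : s = t + k*c) : c ∣ t := by
  have ht : t = s - k * c := by omega
  rw [ht]; exact dvd_sub h (Dvd.dvd.mul_left dvd_rfl k)

private lemma fin4_eq {dd : Fin 4 → ℤ} {w x y z : ℤ} (h0 : dd 0 = w) (h1 : dd 1 = x)
    (h2 : dd 2 = y) (h3 : dd 3 = z) : dd = ![w,x,y,z] := by
  funext i; fin_cases i <;> simp_all

set_option maxHeartbeats 1000000 in
theorem stmt13 (dd : Fin 4 → ℤ) (hpos : ∀ j, 0 < dd j)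
    (hmono : dd 0 ≤ dd 1 ∧ dd 1 ≤ dd 2 ∧ dd 2 ≤ dd 3) :
    Ripe dd ↔
      (dd = ![1, 1, 1, 1] ∨ dd = ![1, 1, 1, 2] ∨ dd = ![1, 1, 2, 3] ∨ dd = ![1, 2, 3, 5] ∨
        dd = ![1, 3, 4, 5] ∨ dd = ![2, 3, 5, 7] ∨ dd = ![3, 4, 5, 7]) := by
  constructor
  · rintro ⟨hp, hg, hdvd, heq⟩
    obtain ⟨hab, hbc, hce⟩ := hmono
    have ha0 := hpos 0
    have hb0 := hpos 1
    have hc0 := hpos 2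
    have he0 := hpos 3
    have He := ext3 dd (hdvd 3)
    have Hc := ext2 dd (hdvd 2)
    have Hb := ext1 dd (hdvd 1)
    have E01 : dd 0 = dd 1 → dd 0 = 1 := fun h => heq 0 1 (Or.inl ⟨by decide, h.symm⟩)
    have E12 : dd 1 = dd 2 → dd 1 = 1 := fun h => heq 1 2 (Or.inl ⟨by decide, h.symm⟩)
    have E23 : dd 2 = dd 3 → dd 2 = 1 := fun h => heq 2 3 (Or.inl ⟨by decide, h.symm⟩)
    have D01 : dd 1 = 2 * dd 0 → dd 0 = 1 := fun h => heq 0 1 (Or.inr h)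
    have D02 : dd 2 = 2 * dd 0 → dd 0 = 1 := fun h => heq 0 2 (Or.inr h)
    have D12 : dd 2 = 2 * dd 1 → dd 1 = 1 := fun h => heq 1 2 (Or.inr h)
    have D13 : dd 3 = 2 * dd 1 → dd 1 = 1 := fun h => heq 1 3 (Or.inr h)
    have key : ∀ t : ℤ, 0 < t → t ∣ dd 0 → t ∣ (dd 0 + dd 1 + dd 2 + dd 3) → t = 1 := by
      intro t ht h1 h2
      have hga : Int.gcd (dd 0) (dd 0 + dd 1 + dd 2 + dd 3) = 1 := by
        have := hg 0; rwa [Fin.sum_univ_four] at this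
      have hdv : t ∣ ((Int.gcd (dd 0) (dd 0 + dd 1 + dd 2 + dd 3) : ℤ)) := Int.dvd_coe_gcd h1 h2
      rw [hga] at hdv
      simp only [Nat.cast_one] at hdv
      have := Int.le_of_dvd one_pos hdv
      omega
    rcases He with hE | hE | hE
    · -- Case III: d3 ∣ a+b
      rcases mulc he0 (by omega) hE (by omega) with h3 | h3 | h3 | h3
      · -- e = a + b
        rcases Hc with hC | hC | hC
        · -- c ∣ a+b
          rcases mulc hc0 (by omega) hC (by omega) with h2 | h2 | h2 | h2
          · exact absurd (E23 (by omega)) (by omega)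
          · have := E01 (by omega)
            exact Or.inr (Or.inl (fin4_eq (by omega) (by omega) (by omega) (by omega)))
          · exact absurd h2 (by omega)
          · exact absurd h2 (by omega)
        · -- c ∣ a+e = 2a+b
          have hC' : dd 2 ∣ 2*dd 0 + dd 1 := by
            rwa [(by omega : dd 0 + dd 3 = 2*dd 0 + dd 1)] at hC
          rcases mulc hc0 (by omega) hC' (by omega) with h2 | h2 | h2 | h2
          · exact absurd h2 (by omega)
          · -- 2a + b = 2c  (case III-b2)
            rcases Hb with hB | hB | hB
            · -- b ∣ a+c
              rcases mulc hb0 (by omega) hB (by omega) with h1 | h1 | h1 | h1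
              · exact absurd h1 (by omega)
              · -- a+c = 2b  ⇒  4a = 3b  ⇒ (3,4,5,7)
                have h4 : (4:ℤ) ∣ dd 1 := by omega
                obtain ⟨u, hu⟩ := h4
                have hu1 : u = 1 := key u (by omega) ⟨3, by omega⟩ ⟨19, by omega⟩
                exact Or.inr (Or.inr (Or.inr (Or.inr (Or.inr (Or.inr
                  (fin4_eq (by omega) (by omega) (by omega) (by omega)))))))
              · exact absurd h1 (by omega)
              · exact absurd h1 (by omega)
            · -- b ∣ a+e = 2a+b ⇒ b ∣ 2a
              have hB' : dd 1 ∣ 2*dd 0 := dred 1 hB (by omega)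
              rcases mulc hb0 (by omega) hB' (by omega) with h1 | h1 | h1 | h1
              · exact absurd (E12 (by omega)) (by omega)
              · exact absurd (E01 (by omega)) (by omega)
              · exact absurd h1 (by omega)
              · exact absurd h1 (by omega)
            · -- b ∣ c+e,  2(c+e) = 4a+3b
              rcases mulc hb0 (by omega) hB (by omega) with h1 | h1 | h1 | h1
              · exact absurd h1 (by omega)
              · exact absurd h1 (by omega)
              · -- c+e = 3b ⇒ 3b = 4a ⇒ (3,4,5,7)
                have h4 : (4:ℤ) ∣ dd 1 := by omega
                obtain ⟨u, hu⟩ := h4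
                have hu1 : u = 1 := key u (by omega) ⟨3, by omega⟩ ⟨19, by omega⟩
                exact Or.inr (Or.inr (Or.inr (Or.inr (Or.inr (Or.inr
                  (fin4_eq (by omega) (by omega) (by omega) (by omega)))))))
              · exact absurd h1 (by omega)
          · -- 2a+b = 3c ⇒ a=b=c ⇒ (1,1,1,2)
            have := E01 (by omega)
            exact Or.inr (Or.inl (fin4_eq (by omega) (by omega) (by omega) (by omega)))
          · exact absurd h2 (by omega)
        · -- c ∣ b+e = a+2b
          have hC' : dd 2 ∣ dd 0 + 2*dd 1 := by
            rwa [(by omega : dd 1 + dd 3 = dd 0 + 2*dd 1)] at hC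
          rcases mulc hc0 (by omega) hC' (by omega) with h2 | h2 | h2 | h2
          · exact absurd h2 (by omega)
          · -- a+2b = 2c  (case III-c2)
            rcases Hb with hB | hB | hB
            · -- b ∣ a+c, 2(a+c) = 3a+2b
              rcases mulc hb0 (by omega) hB (by omega) with h1 | h1 | h1 | h1
              · exact absurd h1 (by omega)
              · -- a+c = 2b ⇒ 3a = 2b ⇒ (2,3,4,5) pattern, killed by D02
                have h3d : (2:ℤ) ∣ dd 0 := by omega
                obtain ⟨u, hu⟩ := h3d
                exact absurd (D02 (by omega)) (by omega)
              · exact absurd h1 (by omega)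
              · exact absurd h1 (by omega)
            · -- b ∣ a+e = 2a+b ⇒ b ∣ 2a
              have hB' : dd 1 ∣ 2*dd 0 := dred 1 hB (by omega)
              rcases mulc hb0 (by omega) hB' (by omega) with h1 | h1 | h1 | h1
              · exact absurd (D01 (by omega)) (by omega)
              · exact absurd (E01 (by omega)) (by omega)
              · exact absurd h1 (by omega)
              · exact absurd h1 (by omega)
            · -- b ∣ c+e, 2(c+e) = 3a+4b
              rcases mulc hb0 (by omega) hB (by omega) with h1 | h1 | h1 | h1
              · exact absurd h1 (by omega)
              · exact absurd h1 (by omega)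
              · -- c+e = 3b ⇒ 2b = 3a
                have h3d : (2:ℤ) ∣ dd 0 := by omega
                obtain ⟨u, hu⟩ := h3d
                exact absurd (D02 (by omega)) (by omega)
              · exact absurd h1 (by omega)
          · -- a+2b = 3c ⇒ a=b=c ⇒ (1,1,1,2)
            have := E01 (by omega)
            exact Or.inr (Or.inl (fin4_eq (by omega) (by omega) (by omega) (by omega)))
          · exact absurd h2 (by omega)
      · -- a+b = 2e ⇒ all equal ⇒ (1,1,1,1)
        have := E01 (by omega)
        exact Or.inl (fin4_eq (by omega) (by omega) (by omega) (by omega))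
      · exact absurd h3 (by omega)
      · exact absurd h3 (by omega)
    · -- Case II: d3 ∣ a+c
      rcases mulc he0 (by omega) hE (by omega) with h3 | h3 | h3 | h3
      · -- e = a + c
        have case_c_ab : dd 2 ∣ dd 0 + dd 1 →
            (dd = ![1, 1, 1, 1] ∨ dd = ![1, 1, 1, 2] ∨ dd = ![1, 1, 2, 3] ∨ dd = ![1, 2, 3, 5] ∨
              dd = ![1, 3, 4, 5] ∨ dd = ![2, 3, 5, 7] ∨ dd = ![3, 4, 5, 7]) := by
          intro hC
          rcases mulc hc0 (by omega) hC (by omega) with h2 | h2 | h2 | h2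
          · -- c = a+b, e = 2a+b  (case II1a)
            have Hb' : dd 1 ∣ 2*dd 0 ∨ dd 1 ∣ 3*dd 0 := by
              rcases Hb with hB | hB | hB
              · exact Or.inl (dred 1 hB (by omega))
              · exact Or.inr (dred 1 hB (by omega))
              · exact Or.inr (dred 2 hB (by omega))
            rcases Hb' with hB | hB
            · rcases mulc hb0 (by omega) hB (by omega) with h1 | h1 | h1 | h1
              · exact absurd (D13 (by omega)) (by omega)
              · have := E01 (by omega)
                exact Or.inr (Or.inr (Or.inl
                  (fin4_eq (by omega) (by omega) (by omega) (by omega))))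
              · exact absurd h1 (by omega)
              · exact absurd h1 (by omega)
            · rcases mulc hb0 (by omega) hB (by omega) with h1 | h1 | h1 | h1
              · -- 3a = b ⇒ (1,3,4,5)
                have hu1 : dd 0 = 1 := key (dd 0) ha0 dvd_rfl ⟨13, by omega⟩
                exact Or.inr (Or.inr (Or.inr (Or.inr (Or.inl
                  (fin4_eq (by omega) (by omega) (by omega) (by omega))))))
              · -- 3a = 2b ⇒ (2,3,5,7)
                have h2d : (2:ℤ) ∣ dd 0 := by omega
                obtain ⟨u, hu⟩ := h2d
                have hu1 : u = 1 := key u (by omega) ⟨2, by omega⟩ ⟨17, by omega⟩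
                exact Or.inr (Or.inr (Or.inr (Or.inr (Or.inr (Or.inl
                  (fin4_eq (by omega) (by omega) (by omega) (by omega)))))))
              · -- 3a = 3b ⇒ a=b ⇒ (1,1,2,3)
                have := E01 (by omega)
                exact Or.inr (Or.inr (Or.inl
                  (fin4_eq (by omega) (by omega) (by omega) (by omega))))
              · exact absurd h1 (by omega)
          · -- a+b = 2c ⇒ a=b=c ⇒ (1,1,1,2)
            have := E01 (by omega)
            exact Or.inr (Or.inl (fin4_eq (by omega) (by omega) (by omega) (by omega)))
          · exact absurd h2 (by omega)
          · exact absurd h2 (by omega)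
        rcases Hc with hC | hC | hC
        · exact case_c_ab hC
        · -- c ∣ a+e = 2a+c ⇒ c ∣ 2a
          have hC' : dd 2 ∣ 2*dd 0 := dred 1 hC (by omega)
          rcases mulc hc0 (by omega) hC' (by omega) with h2 | h2 | h2 | h2
          · -- 2a = c ⇒ a=1, c=2, e=3
            have hA := D02 (by omega)
            have hb12 : dd 1 = 1 ∨ dd 1 = 2 := by omega
            rcases hb12 with hb | hb
            · exact Or.inr (Or.inr (Or.inl
                (fin4_eq (by omega) (by omega) (by omega) (by omega))))
            · exact absurd (E12 (by omega)) (by omega)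
          · -- a = c ⇒ a=b=c ⇒ (1,1,1,2)
            have := E01 (by omega)
            exact Or.inr (Or.inl (fin4_eq (by omega) (by omega) (by omega) (by omega)))
          · exact absurd h2 (by omega)
          · exact absurd h2 (by omega)
        · -- c ∣ b+e = a+b+c ⇒ c ∣ a+b
          exact case_c_ab (dred 1 hC (by omega))
      · -- a+c = 2e ⇒ all equal ⇒ (1,1,1,1)
        have := E01 (by omega)
        exact Or.inl (fin4_eq (by omega) (by omega) (by omega) (by omega))
      · exact absurd h3 (by omega)
      · exact absurd h3 (by omega)
    · -- Case I: d3 ∣ b+c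
      rcases mulc he0 (by omega) hE (by omega) with h3 | h3 | h3 | h3
      · -- e = b + c
        have case_c_ab : dd 2 ∣ dd 0 + dd 1 →
            (dd = ![1, 1, 1, 1] ∨ dd = ![1, 1, 1, 2] ∨ dd = ![1, 1, 2, 3] ∨ dd = ![1, 2, 3, 5] ∨
              dd = ![1, 3, 4, 5] ∨ dd = ![2, 3, 5, 7] ∨ dd = ![3, 4, 5, 7]) := by
          intro hC
          rcases mulc hc0 (by omega) hC (by omega) with h2 | h2 | h2 | h2
          · -- c = a+b, e = a+2b  (case I1)
            have hB : dd 1 ∣ 2*dd 0 := by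
              rcases Hb with hB | hB | hB
              · exact dred 1 hB (by omega)
              · exact dred 2 hB (by omega)
              · exact dred 3 hB (by omega)
            rcases mulc hb0 (by omega) hB (by omega) with h1 | h1 | h1 | h1
            · -- 2a = b ⇒ (1,2,3,5)
              have := D01 (by omega)
              exact Or.inr (Or.inr (Or.inr (Or.inl
                (fin4_eq (by omega) (by omega) (by omega) (by omega)))))
            · -- a = b ⇒ (1,1,2,3)
              have := E01 (by omega)
              exact Or.inr (Or.inr (Or.inl
                (fin4_eq (by omega) (by omega) (by omega) (by omega))))
            · exact absurd h1 (by omega)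
            · exact absurd h1 (by omega)
          · -- a+b = 2c ⇒ a=b=c ⇒ (1,1,1,2)
            have := E01 (by omega)
            exact Or.inr (Or.inl (fin4_eq (by omega) (by omega) (by omega) (by omega)))
          · exact absurd h2 (by omega)
          · exact absurd h2 (by omega)
        rcases Hc with hC | hC | hC
        · exact case_c_ab hC
        · -- c ∣ a+e = a+b+c ⇒ c ∣ a+b
          exact case_c_ab (dred 1 hC (by omega))
        · -- c ∣ b+e = 2b+c ⇒ c ∣ 2b
          have hC' : dd 2 ∣ 2*dd 1 := dred 1 hC (by omega)
          rcases mulc hc0 (by omega) hC' (by omega) with h2 | h2 | h2 | h2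
          · -- 2b = c ⇒ b=1, c=2, a=1, e=3 ⇒ (1,1,2,3)
            have := D12 (by omega)
            exact Or.inr (Or.inr (Or.inl
              (fin4_eq (by omega) (by omega) (by omega) (by omega))))
          · -- b = c ⇒ b=1 ⇒ (1,1,1,2)
            have := E12 (by omega)
            exact Or.inr (Or.inl (fin4_eq (by omega) (by omega) (by omega) (by omega)))
          · exact absurd h2 (by omega)
          · exact absurd h2 (by omega)
      · -- b+c = 2e ⇒ b=c=e ⇒ (1,1,1,1)
        have := E12 (by omega)
        exact Or.inl (fin4_eq (by omega) (by omega) (by omega) (by omega))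
      · exact absurd h3 (by omega)
      · exact absurd h3 (by omega)
  · intro h
    rcases h with h | h | h | h | h | h | h <;> subst h <;> (unfold Ripe; decide)
end

section
/- For all integers a, b and all integers n ≥ 1, the lattice width of T_{a,b,n} is at most 2⌈n^{1/3}⌉. -/
open scoped BigOperators

lemma sum_lin18 (u : Fin 3 → ℤ) : IsLinearMap ℝ (fun x : Fin 3 → ℝ => ∑ i, (u i : ℝ) * x i) := by
  constructor
  · intro x y; simp [mul_add, Finset.sum_add_distrib]
  · intro c x; simp [Finset.mul_sum, smul_eq_mul, mul_left_comm]

lemma tet_bound18 (a b n : ℤ) (u : Fin 3 → ℤ) (M : ℝ)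
    (h0 : |(u 0 : ℝ)| ≤ M) (h1 : |(u 1 : ℝ)| ≤ M)
    (h2 : |((u 0 * a + u 1 * b + u 2 * n : ℤ) : ℝ)| ≤ M) :
    ∀ x ∈ tetSet (stdTet a b n), |∑ i, (u i : ℝ) * x i| ≤ M := by
  have hlin := sum_lin18 u
  have hconv : Convex ℝ {x : Fin 3 → ℝ | |∑ i, (u i : ℝ) * x i| ≤ M} := by
    have he : {x : Fin 3 → ℝ | |∑ i, (u i : ℝ) * x i| ≤ M}
        = {x | ∑ i, (u i : ℝ) * x i ≤ M} ∩ {x | -M ≤ ∑ i, (u i : ℝ) * x i} := by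
      ext x; simp only [Set.mem_setOf_eq, Set.mem_inter_iff, abs_le]; tauto
    rw [he]
    exact (convex_halfSpace_le hlin M).inter (convex_halfSpace_ge hlin (-M))
  have hM : (0:ℝ) ≤ M := le_trans (abs_nonneg _) h0
  intro x hx
  have hsub : tetSet (stdTet a b n) ⊆ {x : Fin 3 → ℝ | |∑ i, (u i : ℝ) * x i| ≤ M} := by
    apply convexHull_min _ hconv
    rintro _ ⟨j, rfl⟩
    fin_cases j <;>
      simp only [stdTet, Set.mem_setOf_eq, Fin.sum_univ_three, Matrix.cons_val_zero,
        Matrix.cons_val_one, Matrix.head_cons, Matrix.cons_val_two, Matrix.tail_cons] <;>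
      push_cast at h2 ⊢
    · simpa using hM
    · simpa using h0
    · simpa using h1
    · simpa using h2
  exact hsub hx

lemma uWidth_bounds18 (a b n : ℤ) (u : Fin 3 → ℤ) (M : ℝ)
    (h : ∀ x ∈ tetSet (stdTet a b n), |∑ i, (u i : ℝ) * x i| ≤ M) :
    0 ≤ uWidth (tetSet (stdTet a b n)) u ∧ uWidth (tetSet (stdTet a b n)) u ≤ 2 * M := by
  set A := (fun x => ∑ i, (u i : ℝ) * x i) '' tetSet (stdTet a b n) with hA
  have hx0 : stdTet a b n 0 ∈ tetSet (stdTet a b n) :=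
    subset_convexHull ℝ _ (Set.mem_range_self 0)
  have hne : A.Nonempty := ⟨_, Set.mem_image_of_mem _ hx0⟩
  have hub : ∀ y ∈ A, y ≤ M := by
    rintro _ ⟨x, hx, rfl⟩; exact le_trans (le_abs_self _) (h x hx)
  have hlb : ∀ y ∈ A, -M ≤ y := by
    rintro _ ⟨x, hx, rfl⟩; exact neg_le_of_abs_le (h x hx)
  have hM : (0:ℝ) ≤ M := le_trans (abs_nonneg _) (h _ hx0)
  have h1 : sSup A ≤ M := Real.sSup_le hub hM
  have h2 : -M ≤ sInf A := le_csInf hne hlb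
  have h3 : sInf A ≤ sSup A := csInf_le_csSup hne ⟨-M, hlb⟩ ⟨M, hub⟩
  constructor
  · simp only [uWidth, ← hA]; linarith
  · simp only [uWidth, ← hA]; linarith

lemma exists_good18 (a b n : ℤ) (hn : 1 ≤ n) (m : ℤ) (hm : 1 ≤ m) (hmn : n ≤ m ^ 3) :
    ∃ p q r : ℤ, (p ≠ 0 ∨ q ≠ 0) ∧ |p| ≤ m ∧ |q| ≤ m ∧ |p * a + q * b + r * n| ≤ m := by
  have hm0 : 0 < m := hm
  have hn0 : 0 < n := hn
  set D : Finset (ℤ × ℤ) := Finset.Icc (0:ℤ) m ×ˢ Finset.Icc (0:ℤ) m with hD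
  set T : Finset ℤ := Finset.Icc (0:ℤ) (m ^ 2 - 1) with hT
  have hmaps : ∀ pq ∈ D, ((pq.1 * a + pq.2 * b) % n) / m ∈ T := by
    intro pq _
    set X := (pq.1 * a + pq.2 * b) % n with hX
    have hX0 : 0 ≤ X := Int.emod_nonneg _ (by omega)
    have hXn : X < n := Int.emod_lt_of_pos _ hn0
    have hq0 : 0 ≤ X / m := Int.ediv_nonneg hX0 (le_of_lt hm0)
    have hqlt : X / m < m ^ 2 := by
      rw [Int.ediv_lt_iff_lt_mul hm0]
      calc X < n := hXn
        _ ≤ m ^ 3 := hmn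
        _ = m ^ 2 * m := by ring
    simp only [hT, Finset.mem_Icc]
    omega
  have hcard : T.card < D.card := by
    have h1 : D.card = (m + 1).toNat * (m + 1).toNat := by
      simp [hD, Int.card_Icc]
    have h2 : T.card = (m ^ 2).toNat := by
      simp only [hT, Int.card_Icc]
      congr 1; ring
    rw [h1, h2]
    have hmm : ((m + 1).toNat : ℤ) = m + 1 := Int.toNat_of_nonneg (by omega)
    have hm2 : ((m ^ 2).toNat : ℤ) = m ^ 2 := Int.toNat_of_nonneg (by positivity)
    have : ((m ^ 2).toNat : ℤ) < ((m + 1).toNat : ℤ) * ((m + 1).toNat : ℤ) := by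
      rw [hmm, hm2]; nlinarith
    exact_mod_cast this
  obtain ⟨x, hx, y, hy, hxy, hfeq⟩ :=
    Finset.exists_ne_map_eq_of_card_lt_of_maps_to hcard hmaps
  simp only [hD, Finset.mem_product, Finset.mem_Icc] at hx hy
  set A := x.1 * a + x.2 * b with hA
  set B := y.1 * a + y.2 * b with hB
  set X := A % n with hX
  set Y := B % n with hY
  have hXd : X = m * (X / m) + X % m := (Int.mul_ediv_add_emod X m).symm
  have hYd : Y = m * (Y / m) + Y % m := (Int.mul_ediv_add_emod Y m).symm
  have hXm0 : 0 ≤ X % m := Int.emod_nonneg _ (by omega)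
  have hXm1 : X % m < m := Int.emod_lt_of_pos _ hm0
  have hYm0 : 0 ≤ Y % m := Int.emod_nonneg _ (by omega)
  have hYm1 : Y % m < m := Int.emod_lt_of_pos _ hm0
  have hfeq' : m * (X / m) = m * (Y / m) := by rw [hfeq]
  have hsb : |X - Y| ≤ m := by
    rw [abs_le]
    constructor <;> linarith
  refine ⟨x.1 - y.1, x.2 - y.2, -(A / n - B / n), ?_, ?_, ?_, ?_⟩
  · by_contra hc
    push_neg at hc
    exact hxy (Prod.ext (by omega) (by omega))
  · rw [abs_le]; omega
  · rw [abs_le]; omega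
  · have hAd : A = n * (A / n) + X := (Int.mul_ediv_add_emod A n).symm
    have hBd : B = n * (B / n) + Y := (Int.mul_ediv_add_emod B n).symm
    have key : (x.1 - y.1) * a + (x.2 - y.2) * b + -(A / n - B / n) * n = X - Y := by
      have h3 : A - B = n * (A / n) + X - (n * (B / n) + Y) := by rw [← hAd, ← hBd]
      linear_combination h3 - hA + hB
    rw [key]; exact hsb

theorem stmt18 (a b n : ℤ) (hn : 1 ≤ n) :
    latticeWidth (tetSet (stdTet a b n)) ≤ 2 * ((⌈(n : ℝ) ^ ((1 : ℝ) / 3)⌉ : ℤ) : ℝ) := by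
  set m : ℤ := ⌈(n : ℝ) ^ ((1 : ℝ) / 3)⌉ with hmdef
  have hn3 : (1 : ℝ) ≤ (n : ℝ) ^ ((1 : ℝ) / 3) :=
    Real.one_le_rpow (by exact_mod_cast hn) (by norm_num)
  have hceil : (n : ℝ) ^ ((1 : ℝ) / 3) ≤ (m : ℝ) := Int.le_ceil _
  have hm : 1 ≤ m := by exact_mod_cast hn3.trans hceil
  have hmn : n ≤ m ^ 3 := by
    have h1 : (n : ℝ) = ((n : ℝ) ^ ((1 : ℝ) / 3)) ^ (3 : ℕ) := by
      rw [← Real.rpow_natCast ((n : ℝ) ^ ((1 : ℝ) / 3)) 3,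
        ← Real.rpow_mul (by positivity)]
      norm_num
    have h2 : ((n : ℝ) ^ ((1 : ℝ) / 3)) ^ (3 : ℕ) ≤ (m : ℝ) ^ (3 : ℕ) :=
      pow_le_pow_left₀ (by positivity) hceil 3
    have : (n : ℝ) ≤ (m : ℝ) ^ (3 : ℕ) := h1 ▸ h2
    exact_mod_cast this
  obtain ⟨p, q, r, hpq, hp, hq, hs⟩ := exists_good18 a b n hn m hm hmn
  set u : Fin 3 → ℤ := ![p, q, r] with hudef
  have hu0 : u 0 = p := rfl
  have hu1 : u 1 = q := rfl
  have hu2 : u 2 = r := rfl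
  have hune : u ≠ 0 := by
    intro h
    have h0 := congrFun h 0
    have h1 := congrFun h 1
    simp [hudef] at h0 h1
    tauto
  have hb : ∀ x ∈ tetSet (stdTet a b n), |∑ i, (u i : ℝ) * x i| ≤ (m : ℝ) := by
    apply tet_bound18
    · rw [hu0, ← Int.cast_abs]; exact_mod_cast hp
    · rw [hu1, ← Int.cast_abs]; exact_mod_cast hq
    · rw [hu0, hu1, hu2, ← Int.cast_abs]; exact_mod_cast hs
  have hw := uWidth_bounds18 a b n u (m : ℝ) hb
  have hmem : uWidth (tetSet (stdTet a b n)) u ∈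
      {w : ℝ | ∃ u : Fin 3 → ℤ, u ≠ 0 ∧ uWidth (tetSet (stdTet a b n)) u = w} :=
    ⟨u, hune, rfl⟩
  have hbdd : BddBelow {w : ℝ | ∃ u : Fin 3 → ℤ, u ≠ 0 ∧ uWidth (tetSet (stdTet a b n)) u = w} := by
    refine ⟨0, ?_⟩
    rintro w ⟨u', _, rfl⟩
    set M' : ℝ := |(u' 0 : ℝ)| + |(u' 1 : ℝ)| + |((u' 0 * a + u' 1 * b + u' 2 * n : ℤ) : ℝ)|
      with hM'
    have hb' : ∀ x ∈ tetSet (stdTet a b n), |∑ i, (u' i : ℝ) * x i| ≤ M' := by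
      apply tet_bound18
      · have := abs_nonneg ((u' 1 : ℝ))
        have := abs_nonneg (((u' 0 * a + u' 1 * b + u' 2 * n : ℤ) : ℝ))
        rw [hM']; linarith
      · have := abs_nonneg ((u' 0 : ℝ))
        have := abs_nonneg (((u' 0 * a + u' 1 * b + u' 2 * n : ℤ) : ℝ))
        rw [hM']; linarith
      · have := abs_nonneg ((u' 0 : ℝ))
        have := abs_nonneg ((u' 1 : ℝ))
        rw [hM']; linarith
    exact (uWidth_bounds18 a b n u' M' hb').1
  calc latticeWidth (tetSet (stdTet a b n)) ≤ uWidth (tetSet (stdTet a b n)) u :=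
        csInf_le hbdd hmem
    _ ≤ 2 * (m : ℝ) := hw.2
end
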